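/- Let (J,T) be a J-ternary algebra. Then T with the triple product ⟨x,y,z⟩ is a special (1,1) Freudenthal-Kantor triple system: with L(x,y)z = ⟨x,y,z⟩ and K(x,y)z = ⟨x,z,y⟩ − ⟨y,z,x⟩, the identities [L(u,v),L(x,y)] = L(L(u,v)x,y) + L(x,L(v,u)y), K(K(u,v)x,y) = L(y,x)K(u,v) − K(u,v)L(x,y), and K(x,y) = L(y,x) − L(x,y) hold. -/
import Mathlib


/-- `K(x,y)z = ⟨x,z,y⟩ - ⟨y,z,x⟩` associated to a trilinear product. -/
noncomputable def Kf {F : Type*} [Field F] {T : Type*} [AddCommGroup T] [Module F T]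
    (tp : T →ₗ[F] T →ₗ[F] T →ₗ[F] T) (x y z : T) : T :=
  tp x z y - tp y z x

theorem Jternary_is_special_FKTS
    (F : Type*) [Field F] (h2 : (2 : F) ≠ 0) (h3 : (3 : F) ≠ 0)
    (J : Type*) [AddCommGroup J] [Module F J]
    (T : Type*) [AddCommGroup T] [Module F T]
    -- Jordan algebra structure on J
    (mul : J →ₗ[F] J →ₗ[F] J) (e : J)
    (hcomm : ∀ a b : J, mul a b = mul b a)
    (hunit : ∀ a : J, mul e a = a)
    (hJordan : ∀ a b : J, mul (mul a a) (mul b a) = mul (mul (mul a a) b) a)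
    -- unital special Jordan module structure on T
    (act : J →ₗ[F] T →ₗ[F] T)
    (hacte : act e = LinearMap.id)
    (hactspecial : ∀ (a b : J) (x : T),
      act (mul a b) x = (1 / 2 : F) • (act a (act b x) + act b (act a x)))
    -- skew-symmetric inner product ⟨.|.⟩ : T × T → J
    (inner : T →ₗ[F] T →ₗ[F] J)
    (hskew : ∀ x y : T, inner x y = -inner y x)
    -- triple product on T
    (tp : T →ₗ[F] T →ₗ[F] T →ₗ[F] T)
    (JT1 : ∀ (a : J) (x y : T),
      mul a (inner x y) = (1 / 2 : F) • (inner (act a x) y + inner x (act a y)))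
    (JT2 : ∀ (a : J) (x y z : T),
      act a (tp x y z) = tp (act a x) y z - tp x (act a y) z + tp x y (act a z))
    (JT3 : ∀ x y z : T, tp x y z = tp z y x - act (inner x z) y)
    (JT4 : ∀ x y z : T, tp x y z = tp y x z + act (inner x y) z)
    (JT5 : ∀ x y z w : T,
      inner (tp x y z) w + inner z (tp x y w) = inner x (act (inner z w) y))
    (JT6 : ∀ x y z w v : T,
      tp x y (tp z w v) = tp (tp x y z) w v + tp z (tp y x w) v + tp z w (tp x y v)) :
    -- (FK1)
    (∀ u v x y z : T,
      tp u v (tp x y z) - tp x y (tp u v z)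
        = tp (tp u v x) y z + tp x (tp v u y) z)
    -- (FK2)
    ∧ (∀ u v x y z : T,
      Kf tp (Kf tp u v x) y z
        = tp y x (Kf tp u v z) - Kf tp u v (tp x y z))
    -- speciality: K(x,y) = L(y,x) - L(x,y)
    ∧ (∀ x y z : T, Kf tp x y z = tp y x z - tp x y z) := by
  have Kact : ∀ a b w : T, Kf tp a b w = -(act (inner a b) w) := by
    intro a b w
    rw [Kf, JT3 a w b]
    abel
  refine ⟨?_, ?_, ?_⟩
  · intro u v x y z
    rw [JT6 u v x y z]
    abel
  · intro u v x y z
    set c := inner u v with hc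
    rw [Kact u v x, Kact u v z, Kact (-(act c x)) y z, Kact u v (tp x y z)]
    simp only [map_neg, LinearMap.neg_apply, neg_neg, sub_neg_eq_add]
    have E1 := JT2 c x y z
    have E2 := JT2 c y x z
    have E3 := JT4 (act c x) y z
    have E4 := JT4 (act c y) x z
    have E5 := JT4 x y (act c z)
    have E6 : act c (tp x y z) = act c (tp y x z) + act c (act (inner x y) z) := by
      rw [← map_add]
      exact congrArg _ (JT4 x y z)
    have H1 := hactspecial c (inner x y) z
    have H2' : act (mul c (inner x y)) z
        = (1 / 2 : F) • (act (inner (act c x) y) z - act (inner (act c y) x) z) := by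
      rw [JT1 c x y, hskew x (act c y)]
      simp [sub_eq_add_neg]
    have H' : act (inner (act c x) y) z - act (inner (act c y) x) z
        = act c (act (inner x y) z) + act (inner x y) (act c z) := by
      have := H2'.symm.trans H1
      have h12 : (1 / 2 : F) ≠ 0 := one_div_ne_zero h2
      exact smul_right_injective T h12 this
    rw [show ((inner u) v : J) = c from rfl]
    apply smul_right_injective T h2
    linear_combination (norm := module)
      (-(1 : F)) • (E1 + E2 + E3 + E4 + E5 + E6) + (1 : F) • H'
  · intro x y z
    rw [Kact x y z, JT4 x y z]
    abel
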